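/- arXiv:2207.00613 — 4 statements merged into one kernel-verified Lean document; each statement's English description precedes it below -/
import Mathlib

section
/- Let n ≥ 1 and M ∈ {1, …, n}. The number of words w ∈ W_n for which ρ∞(w, wst) ≥ M/n is at most 2·(2n choose n − M + 1), where wst = ABAB…AB ∈ W_n is the word alternating A and B. -/
/-- The number of occurrences of the letter `b` (A = `true`, B = `false`) among the first
`j` letters of the word `w`. -/
def countLetter (m : ℕ) (w : Fin m → Bool) (b : Bool) (j : ℕ) : ℕ :=
  (Finset.univ.filter fun i : Fin m => (i : ℕ) < j ∧ w i = b).card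

/-- `w` is a word in `W_n`: a word of length `2n` in the letters A (`true`) and B (`false`)
containing exactly `n` A's (and hence exactly `n` B's). -/
def IsWord (n : ℕ) (w : Fin (2 * n) → Bool) : Prop :=
  (Finset.univ.filter fun i : Fin (2 * n) => w i = true).card = n

/-- `ρ∞(w, v) = (2/n)·max_{1 ≤ j ≤ 2n} |w_A[j] − v_A[j]|`. -/
noncomputable def rhoInf (n : ℕ) (w v : Fin (2 * n) → Bool) : ℝ :=
  (2 / (n : ℝ)) * ((Finset.Icc 1 (2 * n)).sup fun j =>
    ((countLetter (2 * n) w true j : ℤ) - (countLetter (2 * n) v true j : ℤ)).natAbs : ℕ)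

/-- The standard word `wst = ABAB…AB ∈ W_n`: the letter A (`true`) at odd positions,
i.e. at `0`-based positions of even index. -/
def wst (n : ℕ) : Fin (2 * n) → Bool := fun i => decide ((i : ℕ) % 2 = 0)


namespace RefAux

attribute [local instance 10] Classical.propDecidable

lemma countLetter_zero (m : ℕ) (w : Fin m → Bool) (b : Bool) : countLetter m w b 0 = 0 := by
  simp [countLetter]

lemma countLetter_succ (m : ℕ) (w : Fin m → Bool) (b : Bool) (j : ℕ) (hj : j < m) :
    countLetter m w b (j+1) = countLetter m w b j + (if w ⟨j, hj⟩ = b then 1 else 0) := by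
  classical
  rw [countLetter, countLetter]
  by_cases h : w ⟨j, hj⟩ = b
  · rw [if_pos h]
    have he : (Finset.univ.filter fun i : Fin m => (i : ℕ) < j + 1 ∧ w i = b)
        = insert ⟨j, hj⟩ (Finset.univ.filter fun i : Fin m => (i : ℕ) < j ∧ w i = b) := by
      ext i
      simp only [Finset.mem_filter, Finset.mem_insert, Finset.mem_univ, true_and]
      constructor
      · rintro ⟨h1, h2⟩
        rcases Nat.lt_succ_iff_lt_or_eq.mp h1 with h1 | h1
        · exact Or.inr ⟨h1, h2⟩
        · exact Or.inl (Fin.ext h1)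
      · rintro (rfl | ⟨h1, h2⟩)
        · exact ⟨Nat.lt_succ_self j, h⟩
        · exact ⟨Nat.lt_succ_of_lt h1, h2⟩
    rw [he, Finset.card_insert_of_notMem]
    simp
  · rw [if_neg h]
    have he : (Finset.univ.filter fun i : Fin m => (i : ℕ) < j + 1 ∧ w i = b)
        = Finset.univ.filter fun i : Fin m => (i : ℕ) < j ∧ w i = b := by
      ext i
      simp only [Finset.mem_filter, Finset.mem_univ, true_and]
      constructor
      · rintro ⟨h1, h2⟩
        rcases Nat.lt_succ_iff_lt_or_eq.mp h1 with h1 | h1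
        · exact ⟨h1, h2⟩
        · exact absurd (by rwa [show i = ⟨j, hj⟩ from Fin.ext h1] at h2) h
      · rintro ⟨h1, h2⟩; exact ⟨Nat.lt_succ_of_lt h1, h2⟩
    rw [he]
    simp

lemma countLetter_of_le (m : ℕ) (w : Fin m → Bool) (b : Bool) {j : ℕ} (hj : m ≤ j) :
    countLetter m w b j = countLetter m w b m := by
  unfold countLetter
  congr 1
  apply Finset.filter_congr
  intro i _
  simp only [eq_iff_iff, and_congr_left_iff]
  intro _
  have := i.isLt
  constructor <;> intro <;> omega

lemma countLetter_add (m : ℕ) (w : Fin m → Bool) : ∀ j, j ≤ m →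
    countLetter m w true j + countLetter m w false j = j := by
  intro j
  induction j with
  | zero => intro _; simp [countLetter_zero]
  | succ j ih =>
    intro hj
    have hj' : j < m := hj
    have hih := ih (le_of_lt hj')
    rw [countLetter_succ m w true j hj', countLetter_succ m w false j hj']
    cases hw : w ⟨j, hj'⟩ <;> simp [hw] <;> omega

lemma countLetter_congr (m : ℕ) (w w' : Fin m → Bool) (b : Bool) (j : ℕ)
    (h : ∀ i : Fin m, (i : ℕ) < j → w i = w' i) :
    countLetter m w b j = countLetter m w' b j := by
  unfold countLetter
  congr 1
  apply Finset.filter_congr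
  intro i _
  simp only [eq_iff_iff, and_congr_right_iff]
  intro hi
  rw [h i hi]

lemma countLetter_succ_le (m : ℕ) (w : Fin m → Bool) (b : Bool) (j : ℕ) :
    countLetter m w b (j+1) ≤ countLetter m w b j + 1 := by
  by_cases hj : j < m
  · rw [countLetter_succ m w b j hj]
    split <;> omega
  · push_neg at hj
    rw [countLetter_of_le m w b (le_of_lt (Nat.lt_succ_of_le hj)),
      countLetter_of_le m w b hj]
    omega

lemma countLetter_mono (m : ℕ) (w : Fin m → Bool) (b : Bool) {j j' : ℕ} (h : j ≤ j') :
    countLetter m w b j ≤ countLetter m w b j' := by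
  apply Finset.card_le_card
  intro i hi
  simp only [Finset.mem_filter, Finset.mem_univ, true_and] at *
  exact ⟨lt_of_lt_of_le hi.1 h, hi.2⟩

def Sp (m : ℕ) (w : Fin m → Bool) (j : ℕ) : ℤ := 2 * countLetter m w true j - j

lemma Sp_zero (m : ℕ) (w : Fin m → Bool) : Sp m w 0 = 0 := by
  simp [Sp, countLetter_zero]

lemma Sp_succ_le (m : ℕ) (w : Fin m → Bool) (j : ℕ) : Sp m w (j+1) ≤ Sp m w j + 1 := by
  have := countLetter_succ_le m w true j
  unfold Sp
  push_cast
  omega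

lemma ivt (f : ℕ → ℤ) (a : ℤ) (h0 : f 0 < a) (hstep : ∀ j, f (j+1) ≤ f j + 1) :
    ∀ J, a ≤ f J → ∃ j, j ≤ J ∧ f j = a := by
  intro J
  induction J with
  | zero => intro h; omega
  | succ J ih =>
    intro h
    by_cases hJ : a ≤ f J
    · obtain ⟨j, hj, hja⟩ := ih hJ
      exact ⟨j, Nat.le_succ_of_le hj, hja⟩
    · have := hstep J
      exact ⟨J+1, le_refl _, by omega⟩

lemma countLetter_top (m : ℕ) (w : Fin m → Bool) (b : Bool) :
    countLetter m w b m = (Finset.univ.filter fun i => w i = b).card := by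
  unfold countLetter
  congr 1
  apply Finset.filter_congr
  intro i _
  simp [i.isLt]

lemma countLetter_flip_suffix (m t : ℕ) (w : Fin m → Bool) :
    ∀ j, t ≤ j → j ≤ m →
      countLetter m (fun i => if (i : ℕ) < t then w i else !(w i)) true j
        + countLetter m w false t
      = countLetter m w true t + countLetter m w false j := by
  intro j
  induction j with
  | zero =>
    intro ht _
    interval_cases t
    rw [countLetter_zero, countLetter_zero, countLetter_zero]
  | succ j ih =>
    intro ht hj
    have hj' : j < m := hj
    rcases Nat.lt_or_ge j t with h | h
    · -- t = j + 1
      have ht' : t = j + 1 := by omega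
      subst ht'
      rw [countLetter_congr m (fun i => if (i : ℕ) < j + 1 then w i else !(w i)) w
        true (j+1) (fun i hi => by simp [hi])]
    · have hih := ih h (le_of_lt hj')
      rw [countLetter_succ m _ true j hj', countLetter_succ m w false j hj']
      have hnotlt : ¬ ((j : ℕ) < t) := by omega
      simp only [hnotlt, if_false]
      cases hw : w ⟨j, hj'⟩ <;> simp [hw] <;> omega

noncomputable def hit (m a : ℕ) (w : Fin m → Bool) : ℕ := sInf {j | Sp m w j = a}

lemma hit_spec (m a : ℕ) (ha : 1 ≤ a) (w : Fin m → Bool)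
    (hw : ∃ j, j ≤ m ∧ (a : ℤ) ≤ Sp m w j) :
    Sp m w (hit m a w) = a ∧ hit m a w ≤ m ∧ ∀ i, i < hit m a w → Sp m w i ≠ a := by
  obtain ⟨j, hj, hja⟩ := hw
  obtain ⟨j₀, hj₀, hj₀a⟩ := ivt (Sp m w) a (by rw [Sp_zero]; exact_mod_cast ha)
    (Sp_succ_le m w) j hja
  have hne : {j | Sp m w j = (a : ℤ)}.Nonempty := ⟨j₀, hj₀a⟩
  refine ⟨Nat.sInf_mem hne, le_trans (Nat.sInf_le hj₀a) (le_trans hj₀ hj),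
    fun i hi => Nat.notMem_of_lt_sInf hi⟩

lemma card_count_eq (m k : ℕ) :
    (Finset.univ.filter fun v : Fin m → Bool =>
      (Finset.univ.filter fun i => v i = true).card = k).card = Nat.choose m k := by
  classical
  have : (Finset.univ.filter fun v : Fin m → Bool =>
      (Finset.univ.filter fun i => v i = true).card = k).card
      = (Finset.powersetCard k (Finset.univ : Finset (Fin m))).card := by
    apply Finset.card_bij (fun v _ => Finset.univ.filter fun i => v i = true)
    · intro v hv
      simp only [Finset.mem_filter, Finset.mem_univ, true_and] at hv
      rw [Finset.mem_powersetCard]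
      exact ⟨Finset.subset_univ _, hv⟩
    · intro v₁ h₁ v₂ h₂ he
      funext i
      have : (i ∈ Finset.univ.filter fun i => v₁ i = true)
          ↔ (i ∈ Finset.univ.filter fun i => v₂ i = true) := by rw [he]
      simp only [Finset.mem_filter, Finset.mem_univ, true_and] at this
      exact Bool.eq_iff_iff.mpr this
    · intro s hs
      rw [Finset.mem_powersetCard] at hs
      refine ⟨fun i => decide (i ∈ s), ?_, ?_⟩
      · simp only [Finset.mem_filter, Finset.mem_univ, true_and]
        rw [show (Finset.univ.filter fun i => decide (i ∈ s) = true) = s by ext i; simp]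
        exact hs.2
      · ext i; simp
  rw [this, Finset.card_powersetCard, Finset.card_univ, Fintype.card_fin]

lemma card_upper_le (n a : ℕ) (ha : 1 ≤ a) :
    (Finset.univ.filter fun w : Fin (2*n) → Bool =>
      IsWord n w ∧ ∃ j, j ≤ 2*n ∧ (a : ℤ) ≤ Sp (2*n) w j).card
    ≤ Nat.choose (2*n) (n + a) := by
  classical
  rw [← card_count_eq (2*n) (n+a)]
  apply Finset.card_le_card_of_injOn
    (fun w => fun i : Fin (2*n) => if (i : ℕ) < hit (2*n) a w then w i else !(w i))
  · -- maps to
    intro w hw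
    simp only [Finset.mem_coe, Finset.mem_filter, Finset.mem_univ, true_and] at hw ⊢
    obtain ⟨hword, hex⟩ := hw
    obtain ⟨hhit, hle, -⟩ := hit_spec (2*n) a ha w hex
    set t := hit (2*n) a w with htdef
    have key := countLetter_flip_suffix (2*n) t w (2*n) hle (le_refl _)
    have haddt := countLetter_add (2*n) w t hle
    have haddm := countLetter_add (2*n) w (2*n) (le_refl _)
    have htrue : countLetter (2*n) w true (2*n) = n := by
      rw [countLetter_top]; exact hword
    have hSp : 2 * (countLetter (2*n) w true t : ℤ) - t = a := hhit
    rw [← countLetter_top]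
    omega
  · -- injective
    intro w₁ h₁ w₂ h₂ he
    simp only [Finset.mem_coe, Finset.mem_filter, Finset.mem_univ, true_and] at h₁ h₂
    obtain ⟨hhit₁, hle₁, hmin₁⟩ := hit_spec (2*n) a ha w₁ h₁.2
    obtain ⟨hhit₂, hle₂, hmin₂⟩ := hit_spec (2*n) a ha w₂ h₂.2
    set t₁ := hit (2*n) a w₁ with ht₁
    set t₂ := hit (2*n) a w₂ with ht₂
    set v := fun i : Fin (2*n) => if (i : ℕ) < t₁ then w₁ i else !(w₁ i) with hv
    have hv₂ : v = fun i : Fin (2*n) => if (i : ℕ) < t₂ then w₂ i else !(w₂ i) := he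
    -- Sp of v agrees with Sp of w₁ up to t₁
    have hagree₁ : ∀ j, j ≤ t₁ → Sp (2*n) v j = Sp (2*n) w₁ j := by
      intro j hj
      unfold Sp
      rw [countLetter_congr (2*n) v w₁ true j (fun i hi => by
        rw [hv]; exact if_pos (lt_of_lt_of_le hi hj))]
    have hagree₂ : ∀ j, j ≤ t₂ → Sp (2*n) v j = Sp (2*n) w₂ j := by
      intro j hj
      unfold Sp
      rw [countLetter_congr (2*n) v w₂ true j (fun i hi => by
        rw [hv₂]; exact if_pos (lt_of_lt_of_le hi hj))]
    have ht12 : t₁ = t₂ := by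
      by_contra hne
      rcases Nat.lt_or_ge t₁ t₂ with h | h
      · exact hmin₂ t₁ h (by rw [← hagree₂ t₁ (le_of_lt h), hagree₁ t₁ (le_refl _)]; exact hhit₁)
      · have h' : t₂ < t₁ := by omega
        exact hmin₁ t₂ h' (by rw [← hagree₁ t₂ (le_of_lt h'), hagree₂ t₂ (le_refl _)]; exact hhit₂)
    funext i
    have hvi₁ : v i = if (i : ℕ) < t₁ then w₁ i else !(w₁ i) := by rw [hv]
    have hvi₂ : v i = if (i : ℕ) < t₂ then w₂ i else !(w₂ i) := by rw [hv₂]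
    rw [← ht12] at hvi₂
    by_cases hi : (i : ℕ) < t₁
    · rw [if_pos hi] at hvi₁ hvi₂; rw [← hvi₁, ← hvi₂]
    · rw [if_neg hi] at hvi₁ hvi₂
      have hb : (!(w₁ i)) = (!(w₂ i)) := by rw [← hvi₁, hvi₂]
      exact Bool.not_inj hb

lemma countLetter_not (m : ℕ) (w : Fin m → Bool) (j : ℕ) :
    countLetter m (fun i => !(w i)) true j = countLetter m w false j := by
  unfold countLetter
  congr 1
  apply Finset.filter_congr
  intro i _
  simp

lemma card_lower_le (n a : ℕ) (ha : 1 ≤ a) :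
    (Finset.univ.filter fun w : Fin (2*n) → Bool =>
      IsWord n w ∧ ∃ j, j ≤ 2*n ∧ Sp (2*n) w j ≤ -(a : ℤ)).card
    ≤ Nat.choose (2*n) (n + a) := by
  classical
  refine le_trans ?_ (card_upper_le n a ha)
  apply Finset.card_le_card_of_injOn (fun w => fun i : Fin (2*n) => !(w i))
  · intro w hw
    simp only [Finset.mem_coe, Finset.mem_filter, Finset.mem_univ, true_and] at hw ⊢
    obtain ⟨hword, j, hj, hSp⟩ := hw
    have hword' : countLetter (2*n) w true (2*n) = n := by rw [countLetter_top]; exact hword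
    have haddm := countLetter_add (2*n) w (2*n) (le_refl _)
    have haddj := countLetter_add (2*n) w j hj
    constructor
    · show (Finset.univ.filter fun i : Fin (2*n) => (!(w i)) = true).card = n
      have hfe : (Finset.univ.filter fun i : Fin (2*n) => (!(w i)) = true)
          = (Finset.univ.filter fun i : Fin (2*n) => w i = false) := by
        apply Finset.filter_congr
        intro i _
        simp
      rw [hfe, ← countLetter_top (2*n) w false]
      omega
    · refine ⟨j, hj, ?_⟩
      have hSp' : 2 * (countLetter (2*n) w true j : ℤ) - j ≤ -(a : ℤ) := hSp
      show (a : ℤ) ≤ 2 * (countLetter (2*n) (fun i => !(w i)) true j : ℤ) - j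
      rw [countLetter_not]
      omega
  · intro w₁ _ w₂ _ he
    funext i
    have : (!(w₁ i)) = (!(w₂ i)) := congrFun he i
    exact Bool.not_inj this

lemma countLetter_wst (n : ℕ) : ∀ j, j ≤ 2*n →
    countLetter (2*n) (wst n) true j = (j+1)/2 := by
  intro j
  induction j with
  | zero => intro _; rw [countLetter_zero]
  | succ j ih =>
    intro hj
    have hj' : j < 2*n := hj
    rw [countLetter_succ (2*n) (wst n) true j hj', ih (le_of_lt hj')]
    by_cases h : j % 2 = 0 <;> simp [wst, h] <;> omega

lemma choose_mono_right (n : ℕ) : ∀ l, l ≤ n → ∀ k, k ≤ l →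
    Nat.choose (2*n) k ≤ Nat.choose (2*n) l := by
  intro l
  induction l with
  | zero => intro _ k hk; interval_cases k; exact le_refl _
  | succ l ih =>
    intro hl k hk
    rcases Nat.eq_or_lt_of_le hk with h | h
    · subst h; exact le_refl _
    · refine le_trans (ih (by omega) k (by omega)) ?_
      exact Nat.choose_le_succ_of_lt_half_left (by omega)

end RefAux

/-- For `1 ≤ M ≤ n`, the number of words `w ∈ W_n` with `ρ∞(w, wst) ≥ M/n` is at most
`2·(2n choose (n − M + 1))`. -/
theorem card_words_far_from_standard_le (n M : ℕ) (hn : 1 ≤ n) (hM : 1 ≤ M) (hMn : M ≤ n) :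
    Nat.card {w : Fin (2 * n) → Bool // IsWord n w ∧ (M : ℝ) / n ≤ rhoInf n w (wst n)} ≤
      2 * Nat.choose (2 * n) (n - M + 1) := by
  classical
  set K := (M+1)/2 with hK
  set a := 2*K - 1 with haa
  have ha : 1 ≤ a := by omega
  set U : Finset (Fin (2*n) → Bool) := Finset.univ.filter fun w =>
    IsWord n w ∧ ∃ j, j ≤ 2*n ∧ (a : ℤ) ≤ RefAux.Sp (2*n) w j with hU
  set Lo : Finset (Fin (2*n) → Bool) := Finset.univ.filter fun w =>
    IsWord n w ∧ ∃ j, j ≤ 2*n ∧ RefAux.Sp (2*n) w j ≤ -(a : ℤ) with hLo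
  have hsub : ∀ w : Fin (2*n) → Bool,
      IsWord n w → (M : ℝ)/n ≤ rhoInf n w (wst n) → w ∈ U ∪ Lo := by
    intro w hw hr
    have hn0 : (0 : ℝ) < n := by exact_mod_cast hn
    unfold rhoInf at hr
    set D := (Finset.Icc 1 (2*n)).sup (fun j =>
      ((countLetter (2*n) w true j : ℤ)
        - (countLetter (2*n) (wst n) true j : ℤ)).natAbs) with hD
    have hMD : M ≤ 2 * D := by
      rw [div_mul_eq_mul_div] at hr
      have h2 : (M : ℝ) ≤ 2 * D := (div_le_div_iff_of_pos_right hn0).mp hr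
      exact_mod_cast h2
    obtain ⟨j, hjmem, hjD⟩ := Finset.exists_mem_eq_sup (Finset.Icc 1 (2*n))
      ⟨1, by simp; omega⟩ (fun j =>
        ((countLetter (2*n) w true j : ℤ)
          - (countLetter (2*n) (wst n) true j : ℤ)).natAbs)
    rw [Finset.mem_Icc] at hjmem
    have hcst := RefAux.countLetter_wst n j hjmem.2
    have hfj : ((countLetter (2*n) w true j : ℤ)
        - (countLetter (2*n) (wst n) true j : ℤ)).natAbs = D := by
      rw [hD, hjD]
    have hcase : (K : ℤ) ≤ (countLetter (2*n) w true j : ℤ)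
          - (countLetter (2*n) (wst n) true j : ℤ)
        ∨ (countLetter (2*n) w true j : ℤ)
          - (countLetter (2*n) (wst n) true j : ℤ) ≤ -(K : ℤ) := by omega
    rcases hcase with h | h
    · apply Finset.mem_union_left
      rw [hU, Finset.mem_filter]
      refine ⟨Finset.mem_univ _, hw, j, hjmem.2, ?_⟩
      unfold RefAux.Sp
      omega
    · apply Finset.mem_union_right
      rw [hLo, Finset.mem_filter]
      refine ⟨Finset.mem_univ _, hw, j, hjmem.2, ?_⟩
      unfold RefAux.Sp
      omega
  have hcard : Nat.card {w : Fin (2 * n) → Bool //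
      IsWord n w ∧ (M : ℝ) / n ≤ rhoInf n w (wst n)} ≤ (U ∪ Lo).card := by
    have hsubset : {w : Fin (2*n) → Bool | IsWord n w ∧ (M : ℝ)/n ≤ rhoInf n w (wst n)}
        ⊆ (↑(U ∪ Lo) : Set (Fin (2*n) → Bool)) := fun w hw => hsub w hw.1 hw.2
    calc Nat.card {w : Fin (2 * n) → Bool //
          IsWord n w ∧ (M : ℝ) / n ≤ rhoInf n w (wst n)}
        = Set.ncard {w : Fin (2*n) → Bool | IsWord n w ∧ (M : ℝ)/n ≤ rhoInf n w (wst n)} :=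
          (Nat.card_coe_set_eq _)
      _ ≤ Set.ncard (↑(U ∪ Lo) : Set (Fin (2*n) → Bool)) :=
          Set.ncard_le_ncard hsubset (Finset.finite_toSet _)
      _ = (U ∪ Lo).card := Set.ncard_coe_finset _
  have hchoose : Nat.choose (2*n) (n + a) ≤ Nat.choose (2*n) (n - M + 1) := by
    by_cases han : a ≤ n
    · rw [← Nat.choose_symm (show n + a ≤ 2*n by omega),
        show 2*n - (n + a) = n - a by omega]
      exact RefAux.choose_mono_right n (n - M + 1) (by omega) (n - a) (by omega)
    · rw [Nat.choose_eq_zero_of_lt (by omega)]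
      exact Nat.zero_le _
  calc Nat.card {w : Fin (2 * n) → Bool //
        IsWord n w ∧ (M : ℝ) / n ≤ rhoInf n w (wst n)} ≤ (U ∪ Lo).card := hcard
    _ ≤ U.card + Lo.card := Finset.card_union_le _ _
    _ ≤ Nat.choose (2*n) (n + a) + Nat.choose (2*n) (n + a) := by
        exact Nat.add_le_add (RefAux.card_upper_le n a ha) (RefAux.card_lower_le n a ha)
    _ ≤ 2 * Nat.choose (2 * n) (n - M + 1) := by
        have := hchoose; omega
end

section
/- Let p : ℕ → ℝ be a positive sequence with p(n) → ∞ and p(n)/n^{1/6} → 0. Let r(n) be the proportion of words w ∈ W_n for which ρ∞(w, wst) ≥ p(n)/√n, i.e., r(n) = #{w ∈ W_n : ρ∞(w, wst) ≥ p(n)/√n} / (2n choose n). Then limsup_{n→∞} r(n)·e^{p(n)²}/2 ≤ 1; in particular r(n) is asymptotically at most 2·e^{−p(n)²}. -/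
/-- The proportion `r(n)` of words `w ∈ W_n` with `ρ∞(w, wst) ≥ p(n)/√n`. -/
noncomputable def propFar (p : ℕ → ℝ) (n : ℕ) : ℝ :=
  (Nat.card {w : Fin (2 * n) → Bool // IsWord n w ∧
      p n / Real.sqrt n ≤ rhoInf n w (wst n)} : ℝ) / (Nat.choose (2 * n) n : ℝ)

/-!
Read a word as the lattice path `walk w j = 2·w_A[j] − j`. The path of `wst` stays in `{0, 1}`, so
`ρ∞(w, wst) ≥ p/√n` forces the path of `w` to reach a level `±l` with `l ≥ p√n − 1`. Flipping every
letter after the first visit to level `t` (the reflection principle) injects the words of `W_n`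
whose path visits `t` into the words with `n + t` letters A; hence at most `2·C(2n, n + l)` words
are far from `wst`, and `C(2n, n + l) ≤ C(2n, n)·exp(−l²/(n + l))`. Finally
`p² − l²/(n + l) ≤ q³ + 2q` with `q = p/n^{1/6} → 0`.
-/

open Finset Filter Topology

theorem exists_le_eq_of_succ_le_add_one {f : ℕ → ℤ} (hf : ∀ i, f (i + 1) ≤ f i + 1) {t : ℤ}
    (h0 : f 0 ≤ t) {j : ℕ} (hj : t ≤ f j) : ∃ i ≤ j, f i = t := by
  induction j with
  | zero => exact ⟨0, le_rfl, le_antisymm h0 hj⟩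
  | succ j ih =>
    by_cases h : t ≤ f j
    · obtain ⟨i, hi, hfi⟩ := ih h
      exact ⟨i, hi.trans j.le_succ, hfi⟩
    · exact ⟨j + 1, le_rfl, by linarith [hf j]⟩

section Words

variable {m : ℕ}

theorem card_filter_card_true_eq_choose (c : ℕ) :
    #{v : Fin m → Bool | #{i | v i = true} = c} = m.choose c := by
  rw [show m.choose c = #(powersetCard c (univ : Finset (Fin m))) by simp]
  refine card_nbij' (fun v => ({i | v i = true} : Finset (Fin m))) (fun s i => decide (i ∈ s))
    ?_ ?_ ?_ ?_
  · intro v hv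
    simpa using hv
  · intro s hs
    simp_all [mem_powersetCard]
  · intro v _
    funext i
    simp
  · intro s _
    ext i
    simp

theorem card_filter_card_true_eq_sub (c : ℤ) :
    #{v : Fin m → Bool | (#{i | v i = true} : ℤ) = c} =
      #{v : Fin m → Bool | (#{i | v i = true} : ℤ) = m - c} := by
  have hnot : ∀ v : Fin m → Bool, (#{i | (!v i) = true} : ℤ) = m - #{i | v i = true} := by
    intro v
    have := card_filter_add_card_filter_not (s := (univ : Finset (Fin m))) (v · = true)
    simp only [Bool.not_eq_true, card_univ, Fintype.card_fin] at this
    simp only [Bool.not_eq_true']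
    omega
  refine card_nbij' (fun v i => !v i) (fun v i => !v i) ?_ ?_ ?_ ?_
  · intro v hv
    simp only [coe_filter, Set.mem_ofPred_eq, mem_univ, true_and] at hv ⊢
    rw [hnot, hv]
  · intro v hv
    simp only [coe_filter, Set.mem_ofPred_eq, mem_univ, true_and] at hv ⊢
    rw [hnot, hv]
    ring
  · intro v _
    simp
  · intro v _
    simp

theorem countLetter_succ (w : Fin m → Bool) (b : Bool) {j : ℕ} (hj : j < m) :
    countLetter m w b (j + 1) = countLetter m w b j + if w ⟨j, hj⟩ = b then 1 else 0 := by
  unfold countLetter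
  split_ifs with hb
  · rw [← card_insert_of_notMem (a := ⟨j, hj⟩) (by simp)]
    congr 1
    ext i
    simp only [mem_filter, mem_univ, true_and, mem_insert, Fin.ext_iff]
    grind
  · rw [add_zero]
    congr 1
    ext i
    simp only [mem_filter, mem_univ, true_and]
    grind

theorem countLetter_of_le (w : Fin m → Bool) (b : Bool) {j : ℕ} (hj : m ≤ j) :
    countLetter m w b j = #{i | w i = b} := by
  unfold countLetter
  congr 1
  ext i
  simp [i.2.trans_le hj]

theorem countLetter_congr {w v : Fin m → Bool} (b : Bool) {j : ℕ}
    (h : ∀ i : Fin m, (i : ℕ) < j → w i = v i) :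
    countLetter m w b j = countLetter m v b j := by
  unfold countLetter
  congr 1
  ext i
  simp only [mem_filter, mem_univ, true_and, and_congr_right_iff]
  intro hi
  rw [h i hi]

theorem countLetter_add_card_filter_not_lt (w : Fin m → Bool) (b : Bool) (j : ℕ) :
    countLetter m w b j + #{i : Fin m | ¬ (i : ℕ) < j ∧ w i = b} = #{i | w i = b} := by
  have := card_filter_add_card_filter_not (s := ({i | w i = b} : Finset (Fin m)))
    (fun i => (i : ℕ) < j)
  simp only [filter_filter] at this
  rw [← this, countLetter]
  simp only [and_comm]

theorem countLetter_true_add_false (w : Fin m → Bool) {j : ℕ} (hj : j ≤ m) :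
    countLetter m w true j + countLetter m w false j = j := by
  have := card_filter_add_card_filter_not (s := ({i | (i : ℕ) < j} : Finset (Fin m)))
    (fun i => w i = true)
  unfold countLetter
  simpa only [filter_filter, Bool.not_eq_true, Fin.card_filter_val_lt, min_eq_right hj] using this

def walk (w : Fin m → Bool) (j : ℕ) : ℤ :=
  2 * (countLetter m w true j : ℤ) - j

theorem walk_zero (w : Fin m → Bool) : walk w 0 = 0 := by
  simp [walk, countLetter]

theorem walk_succ (w : Fin m → Bool) (j : ℕ) :
    walk w (j + 1) = walk w j + 1 ∨ walk w (j + 1) = walk w j - 1 := by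
  unfold walk
  rcases lt_or_ge j m with hj | hj
  · rw [countLetter_succ w true hj]
    split_ifs <;> push_cast <;> omega
  · rw [countLetter_of_le w true hj, countLetter_of_le w true (by omega)]
    right
    push_cast
    ring

theorem exists_abs_walk_eq (w : Fin m → Bool) {a j : ℕ} (h : (a : ℤ) ≤ |walk w j|) :
    ∃ i ≤ j, |walk w i| = a := by
  rcases le_abs'.1 h with hneg | hpos
  · obtain ⟨i, hi, hwi⟩ := exists_le_eq_of_succ_le_add_one (f := fun i => -walk w i)
      (fun i => by rcases walk_succ w i with h | h <;> omega) (t := a)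
      (by simp [walk_zero]) (by omega : (a : ℤ) ≤ -walk w j)
    exact ⟨i, hi, by rw [abs_of_nonpos (by omega)]; omega⟩
  · obtain ⟨i, hi, hwi⟩ := exists_le_eq_of_succ_le_add_one (f := walk w)
      (fun i => by rcases walk_succ w i with h | h <;> omega) (t := a)
      (by simp [walk_zero]) hpos
    exact ⟨i, hi, by rw [hwi, abs_of_nonneg (by omega)]⟩

def reflect (j : ℕ) (w : Fin m → Bool) : Fin m → Bool :=
  fun i => if (i : ℕ) < j then w i else !w i

theorem reflect_reflect (j : ℕ) (w : Fin m → Bool) : reflect j (reflect j w) = w := by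
  funext i
  by_cases h : (i : ℕ) < j <;> simp [reflect, h]

theorem card_filter_reflect (j : ℕ) (w : Fin m → Bool) :
    #{i | reflect j w i = true} =
      countLetter m w true j + #{i : Fin m | ¬ (i : ℕ) < j ∧ w i = false} := by
  have := card_filter_add_card_filter_not (s := ({i | reflect j w i = true} : Finset (Fin m)))
    (fun i => (i : ℕ) < j)
  rw [← this, countLetter]
  simp only [filter_filter]
  congr 2 <;> ext i <;> simp only [mem_filter, mem_univ, true_and, reflect] <;> grind

theorem card_filter_reflect_eq_walk (w : Fin m → Bool) {j : ℕ} (hj : j ≤ m) :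
    (#{i | reflect j w i = true} : ℤ) = walk w j + m - #{i | w i = true} := by
  have h1 := card_filter_reflect j w
  have h2 := countLetter_add_card_filter_not_lt w false j
  have h3 := countLetter_true_add_false w hj
  have h4 : #{i | w i = true} + #{i | w i = false} = m := by
    simpa using card_filter_add_card_filter_not (s := (univ : Finset (Fin m))) (w · = true)
  unfold walk
  omega

open Classical in
noncomputable def hitTime (t : ℤ) (w : Fin m → Bool) : ℕ :=
  if h : ∃ j, walk w j = t then Nat.find h else 0

theorem walk_hitTime {t : ℤ} {w : Fin m → Bool} (h : ∃ j, walk w j = t) :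
    walk w (hitTime t w) = t := by
  rw [hitTime, dif_pos h]
  exact Nat.find_spec h

theorem hitTime_le {t : ℤ} {w : Fin m → Bool} {j : ℕ} (hj : walk w j = t) :
    hitTime t w ≤ j := by
  rw [hitTime, dif_pos ⟨j, hj⟩]
  exact Nat.find_min' _ hj

theorem hitTime_eq_of_reflect_eq {t : ℤ} {v v' : Fin m → Bool} (hv : ∃ j, walk v j = t)
    (hv' : ∃ j, walk v' j = t) (heq : reflect (hitTime t v) v = reflect (hitTime t v') v') :
    hitTime t v = hitTime t v' := by
  wlog hle : hitTime t v ≤ hitTime t v' generalizing v v'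
  · exact (this hv' hv heq.symm (le_of_not_ge hle)).symm
  refine le_antisymm hle (hitTime_le ?_)
  have hprefix : ∀ i : Fin m, (i : ℕ) < hitTime t v → v i = v' i := fun i hi => by
    simpa [reflect, hi, hi.trans_le hle] using congrFun heq i
  calc walk v' (hitTime t v) = walk v (hitTime t v) := by
        rw [walk, walk, countLetter_congr true hprefix]
    _ = t := walk_hitTime hv

theorem card_hits_le (T : ℕ) (t : ℤ) :
    #{w : Fin m → Bool | #{i | w i = true} = T ∧ ∃ j ≤ m, walk w j = t} ≤
      #{v : Fin m → Bool | (#{i | v i = true} : ℤ) = m - T + t} := by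
  refine card_le_card_of_injOn (fun w => reflect (hitTime t w) w) ?_ ?_
  · intro w hw
    simp only [coe_filter, Set.mem_ofPred_eq, mem_univ, true_and] at hw ⊢
    obtain ⟨hT, j, hj, hwj⟩ := hw
    rw [card_filter_reflect_eq_walk w ((hitTime_le hwj).trans hj), walk_hitTime ⟨j, hwj⟩, hT]
    ring
  · intro v hv v' hv' heq
    simp only [coe_filter, Set.mem_ofPred_eq, mem_univ, true_and] at hv hv'
    obtain ⟨-, j, -, hvj⟩ := hv
    obtain ⟨-, j', -, hvj'⟩ := hv'
    have hτ := hitTime_eq_of_reflect_eq ⟨j, hvj⟩ ⟨j', hvj'⟩ heq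
    simp only at heq
    rw [hτ] at heq
    simpa [reflect_reflect] using congrArg (reflect (hitTime t v')) heq

end Words

theorem walk_wst (n : ℕ) {j : ℕ} (hj : j ≤ 2 * n) : walk (wst n) j = (j % 2 : ℕ) := by
  induction j with
  | zero => simp [walk_zero]
  | succ j ih =>
    have hj' : j < 2 * n := by omega
    have := ih hj'.le
    unfold walk at this ⊢
    rw [countLetter_succ _ true hj']
    simp only [wst, decide_eq_true_eq]
    split_ifs <;> push_cast <;> omega

theorem card_isWord_hits_le (n l : ℕ) {t : ℤ} (ht : |t| = l) :
    #{w : Fin (2 * n) → Bool | #{i | w i = true} = n ∧ ∃ j ≤ 2 * n, walk w j = t} ≤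
      (2 * n).choose (n + l) := by
  refine (card_hits_le n t).trans (le_of_eq ?_)
  rw [← card_filter_card_true_eq_choose]
  rcases (abs_eq (Nat.cast_nonneg l)).1 ht with rfl | rfl
  · congr 1
    ext v
    simp only [mem_filter, mem_univ, true_and]
    omega
  · rw [card_filter_card_true_eq_sub]
    congr 1
    ext v
    simp only [mem_filter, mem_univ, true_and]
    omega

/-- `n·ρ∞(w, wst)` is even and the path of `wst` stays in `{0, 1}`, so `x ≤ n·ρ∞(w, wst)` makes
the path of `w` reach height `±farLevel x`. -/
noncomputable def farLevel (x : ℝ) : ℕ :=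
  2 * ⌈x / 2⌉₊ - 1

theorem sub_one_le_farLevel (x : ℝ) : x - 1 ≤ farLevel x := by
  have hceil := Nat.le_ceil (x / 2)
  have : ((2 * ⌈x / 2⌉₊ : ℕ) : ℝ) ≤ farLevel x + 1 := by
    exact_mod_cast (by unfold farLevel; omega)
  push_cast at this
  linarith

theorem exists_abs_walk_eq_farLevel {n : ℕ} (hn : 0 < n) (w : Fin (2 * n) → Bool) {x : ℝ}
    (hx : x ≤ n * rhoInf n w (wst n)) : ∃ j ≤ 2 * n, |walk w j| = farLevel x := by
  set dev : ℕ → ℕ := fun j =>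
    ((countLetter (2 * n) w true j : ℤ) - (countLetter (2 * n) (wst n) true j : ℤ)).natAbs
  obtain ⟨j, hj, hjmax⟩ := exists_mem_eq_sup (Icc 1 (2 * n)) ⟨1, by simp; omega⟩ dev
  have hrho : n * rhoInf n w (wst n) = 2 * dev j := by
    rw [rhoInf, hjmax]
    field_simp
  have hceil : ⌈x / 2⌉₊ ≤ dev j := Nat.ceil_le.2 (by linarith)
  have hwst := walk_wst n (mem_Icc.1 hj).2
  have hdev : 2 * (dev j : ℤ) = |walk w j - walk (wst n) j| := by
    rw [walk, walk, sub_sub_sub_cancel_right, ← mul_sub, abs_mul]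
    simp [dev]
  have htri := abs_sub (walk w j) (walk (wst n) j)
  rw [hwst, Nat.abs_cast] at htri
  rw [hwst] at hdev
  obtain ⟨i, hi, hwi⟩ := exists_abs_walk_eq w (a := farLevel x) (j := j)
    (by have := Nat.mod_lt j two_pos; have := abs_nonneg (walk w j); unfold farLevel; omega)
  exact ⟨i, hi.trans (mem_Icc.1 hj).2, hwi⟩

theorem choose_two_mul_add_le_mul_exp_of_le (n M : ℕ) :
    ∀ l ≤ M, ((2 * n).choose (n + l) : ℝ) ≤
      (2 * n).choose n * Real.exp (-(l : ℝ) ^ 2 / (n + M)) := by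
  intro l
  induction l with
  | zero => simp
  | succ l ih =>
    intro hl
    have hM : (0 : ℝ) < n + M := by
      have : (1 : ℝ) ≤ M := by exact_mod_cast (by omega : 1 ≤ M)
      positivity
    set t : ℝ := (2 * l + 1) / (n + M) with ht
    -- `C(2n, n+l+1) / C(2n, n+l) = (n−l)/(n+l+1) = 1 − (2l+1)/(n+l+1)`, and `1 − y ≤ exp(−y)`
    have hstep : ((n - l : ℕ) : ℝ) ≤ (n + l + 1) * Real.exp (-t) := by
      rcases le_or_gt n l with hnl | hln
      · rw [Nat.sub_eq_zero_of_le hnl, Nat.cast_zero]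
        positivity
      · have htM : t * (n + M) = 2 * l + 1 := by rw [ht]; field_simp
        have hlM : (l : ℝ) + 1 ≤ M := by exact_mod_cast hl
        have ht0 : 0 ≤ t := by positivity
        have hexp := Real.add_one_le_exp (-t)
        rw [Nat.cast_sub hln.le]
        nlinarith [mul_le_mul_of_nonneg_left hexp (by positivity : (0 : ℝ) ≤ n + l + 1)]
    have hrec : ((2 * n).choose (n + (l + 1)) : ℝ) * (n + l + 1) =
        (2 * n).choose (n + l) * ((n - l : ℕ) : ℝ) := by
      have := Nat.choose_succ_right_eq (2 * n) (n + l)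
      rw [show 2 * n - (n + l) = n - l by omega] at this
      exact_mod_cast this
    have hsq : -((l + 1 : ℕ) : ℝ) ^ 2 / (n + M) = -(l : ℝ) ^ 2 / (n + M) + -t := by
      rw [ht]
      push_cast
      field_simp
      ring
    rw [hsq, Real.exp_add, ← mul_assoc]
    refine le_of_mul_le_mul_right ?_ (by positivity : (0 : ℝ) < n + l + 1)
    calc ((2 * n).choose (n + (l + 1)) : ℝ) * (n + l + 1)
        = (2 * n).choose (n + l) * ((n - l : ℕ) : ℝ) := hrec
      _ ≤ ((2 * n).choose n * Real.exp (-(l : ℝ) ^ 2 / (n + M))) *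
            ((n + l + 1) * Real.exp (-t)) :=
          mul_le_mul (ih (by omega)) hstep (by positivity) (by positivity)
      _ = _ := by ring

theorem choose_two_mul_add_le_mul_exp (n l : ℕ) :
    ((2 * n).choose (n + l) : ℝ) ≤ (2 * n).choose n * Real.exp (-(l : ℝ) ^ 2 / (n + l)) :=
  choose_two_mul_add_le_mul_exp_of_le n l l le_rfl

theorem propFar_le (p : ℕ → ℝ) {n : ℕ} (hn : 0 < n) :
    propFar p n ≤ 2 * Real.exp (-(farLevel (p n * √n) : ℝ) ^ 2 / (n + farLevel (p n * √n))) := by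
  classical
  set l := farLevel (p n * √n)
  let hits : ℤ → Finset (Fin (2 * n) → Bool) := fun t =>
    {w | #{i | w i = true} = n ∧ ∃ j ≤ 2 * n, walk w j = t}
  have hsub : ({w | IsWord n w ∧ p n / √n ≤ rhoInf n w (wst n)} :
      Finset (Fin (2 * n) → Bool)) ⊆ hits l ∪ hits (-l) := by
    intro w hw
    simp only [mem_filter, mem_univ, true_and] at hw
    have hscale : p n * √n = n * (p n / √n) := by
      have hsqrt : (0 : ℝ) < √n := by positivity
      field_simp
      rw [Real.sq_sqrt n.cast_nonneg]
    obtain ⟨j, hj, hwj⟩ := exists_abs_walk_eq_farLevel hn w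
      (hscale.trans_le (mul_le_mul_of_nonneg_left hw.2 n.cast_nonneg))
    simp only [hits, mem_union, mem_filter, mem_univ, true_and]
    rcases (abs_eq (Nat.cast_nonneg l)).1 hwj with h | h
    · exact Or.inl ⟨hw.1, j, hj, h⟩
    · exact Or.inr ⟨hw.1, j, hj, h⟩
  have hcount : Nat.card {w : Fin (2 * n) → Bool // IsWord n w ∧ p n / √n ≤ rhoInf n w (wst n)}
      ≤ 2 * (2 * n).choose (n + l) := by
    rw [Nat.card_eq_fintype_card, Fintype.card_subtype]
    calc _ ≤ #(hits l ∪ hits (-l)) := card_le_card hsub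
      _ ≤ #(hits l) + #(hits (-l)) := card_union_le _ _
      _ ≤ (2 * n).choose (n + l) + (2 * n).choose (n + l) :=
          add_le_add (card_isWord_hits_le n l (by simp)) (card_isWord_hits_le n l (by simp))
      _ = 2 * (2 * n).choose (n + l) := by ring
  have hcentral : (0 : ℝ) < (2 * n).choose n := by exact_mod_cast Nat.choose_pos (by omega)
  rw [propFar, div_le_iff₀ hcentral]
  calc _ ≤ (2 * ((2 * n).choose (n + l) : ℕ) : ℝ) := by exact_mod_cast hcount
    _ ≤ 2 * ((2 * n).choose n * Real.exp (-(l : ℝ) ^ 2 / (n + l))) := by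
        gcongr
        exact choose_two_mul_add_le_mul_exp n l
    _ = _ := by ring

theorem sq_sub_sq_div_le {x s l : ℝ} (hs : 0 < s) (hxs : 1 ≤ x * s) (hl : x * s - 1 ≤ l) :
    x ^ 2 - l ^ 2 / (s ^ 2 + l) ≤ (x ^ 3 + 2 * x) / s := by
  set a := x * s - 1 with ha
  have ha0 : 0 ≤ a := by linarith
  have hx : 0 < x := pos_of_mul_pos_left (by linarith) hs.le
  have hsa : 0 < s ^ 2 + a := by positivity
  have hmono : a ^ 2 / (s ^ 2 + a) ≤ l ^ 2 / (s ^ 2 + l) := by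
    rw [div_le_div_iff₀ hsa (by linarith)]
    nlinarith [mul_nonneg (mul_nonneg ha0 (ha0.trans hl)) (sub_nonneg.2 hl),
      mul_nonneg (sq_nonneg s) (sub_nonneg.2 hl), mul_nonneg (sq_nonneg s) ha0]
  have hnum : x ^ 2 * (s ^ 2 + a) - a ^ 2 ≤ (x ^ 3 + 2 * x) * s := by
    rw [ha]
    nlinarith [sq_nonneg x]
  calc x ^ 2 - l ^ 2 / (s ^ 2 + l) ≤ x ^ 2 - a ^ 2 / (s ^ 2 + a) := by linarith
    _ = (x ^ 2 * (s ^ 2 + a) - a ^ 2) / (s ^ 2 + a) := by field_simp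
    _ ≤ ((x ^ 3 + 2 * x) * s) / s ^ 2 :=
        div_le_div₀ (mul_nonneg (by nlinarith [pow_pos hx 3]) hs.le) hnum (by positivity)
          (by linarith)
    _ = (x ^ 3 + 2 * x) / s := by field_simp

theorem propFar_mul_exp_le (p : ℕ → ℝ) {n : ℕ} (hn : 0 < n) (hp : 1 ≤ p n * √n) :
    propFar p n * Real.exp (p n ^ 2) / 2 ≤
      Real.exp ((p n / (n : ℝ) ^ ((1 : ℝ) / 6)) ^ 3 + 2 * (p n / (n : ℝ) ^ ((1 : ℝ) / 6))) := by
  set u : ℝ := (n : ℝ) ^ ((1 : ℝ) / 6)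
  set l := farLevel (p n * √n)
  have hu1 : 1 ≤ u := Real.one_le_rpow (by exact_mod_cast hn) (by norm_num)
  have hu3 : √n = u ^ 3 := by
    rw [Real.sqrt_eq_rpow, ← Real.rpow_natCast, ← Real.rpow_mul n.cast_nonneg]
    norm_num
  have hexp := sq_sub_sq_div_le (Real.sqrt_pos.2 (by positivity)) hp (sub_one_le_farLevel _)
  rw [Real.sq_sqrt n.cast_nonneg] at hexp
  have hq : (p n ^ 3 + 2 * p n) / √n ≤ (p n / u) ^ 3 + 2 * (p n / u) := by
    have hx : 0 < p n := pos_of_mul_pos_left (by linarith) (Real.sqrt_nonneg _)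
    rw [hu3, add_div, div_pow, mul_div_assoc]
    gcongr
    exact le_self_pow₀ hu1 (by norm_num)
  calc propFar p n * Real.exp (p n ^ 2) / 2
      ≤ 2 * Real.exp (-(l : ℝ) ^ 2 / (n + l)) * Real.exp (p n ^ 2) / 2 := by
        gcongr
        exact propFar_le p hn
    _ = Real.exp (p n ^ 2 - (l : ℝ) ^ 2 / (n + l)) := by
        rw [sub_eq_neg_add, neg_div, Real.exp_add]
        ring
    _ ≤ _ := Real.exp_le_exp.2 (hexp.trans hq)

theorem proportion_far_from_standard_asymptotics_general (p : ℕ → ℝ)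
    (htop : Filter.Tendsto p Filter.atTop Filter.atTop)
    (hsmall : Filter.Tendsto (fun n : ℕ => p n / (n : ℝ) ^ ((1 : ℝ) / 6))
      Filter.atTop (nhds 0)) :
    Filter.limsup (fun n : ℕ => propFar p n * Real.exp ((p n) ^ 2) / 2) Filter.atTop ≤ 1 := by
  set q : ℕ → ℝ := fun n => p n / (n : ℝ) ^ ((1 : ℝ) / 6)
  have hbound : Tendsto (fun n => Real.exp (q n ^ 3 + 2 * q n)) atTop (𝓝 1) := by
    have hcont : Continuous fun y : ℝ => Real.exp (y ^ 3 + 2 * y) := by fun_prop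
    simpa [Function.comp_def] using (hcont.tendsto 0).comp hsmall
  have hle : ∀ᶠ n in atTop,
      propFar p n * Real.exp (p n ^ 2) / 2 ≤ Real.exp (q n ^ 3 + 2 * q n) := by
    filter_upwards [htop.eventually_ge_atTop 1, eventually_gt_atTop 0] with n hp hn
    have hsqrt : 1 ≤ √(n : ℝ) := Real.one_le_sqrt.2 (by exact_mod_cast hn)
    exact propFar_mul_exp_le p hn (by nlinarith)
  have hnonneg : ∀ n, 0 ≤ propFar p n * Real.exp (p n ^ 2) / 2 := fun n => by
    unfold propFar
    positivity
  calc limsup (fun n => propFar p n * Real.exp (p n ^ 2) / 2) atTop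
      ≤ limsup (fun n => Real.exp (q n ^ 3 + 2 * q n)) atTop :=
        limsup_le_limsup hle (isCoboundedUnder_le_of_le atTop hnonneg) hbound.isBoundedUnder_le
    _ = 1 := hbound.limsup_eq

/-- If `p` is a positive sequence with `p(n) → ∞` and `p(n) = o(n^{1/6})`, then the
proportion `r(n)` of words `w ∈ W_n` with `ρ∞(w, wst) ≥ p(n)/√n` satisfies
`limsup_{n→∞} r(n)·e^{p(n)²}/2 ≤ 1`, i.e. `r(n)` is asymptotically at most `2·e^{−p(n)²}`. -/
theorem proportion_far_from_standard_asymptotics (p : ℕ → ℝ) (hpos : ∀ n, 0 < p n)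
    (htop : Filter.Tendsto p Filter.atTop Filter.atTop)
    (hsmall : Filter.Tendsto (fun n : ℕ => p n / (n : ℝ) ^ ((1 : ℝ) / 6))
      Filter.atTop (nhds 0)) :
    Filter.limsup (fun n : ℕ => propFar p n * Real.exp ((p n) ^ 2) / 2) Filter.atTop ≤ 1 :=
  proportion_far_from_standard_asymptotics_general p htop hsmall
end

section
/- Let d ≥ 1 and let A, B be d×d complex matrices. There exists N such that for all n ≥ N, ‖exp(A/n)·exp(B/n) − exp((A + B)/n)‖ ≤ (1/n²)·‖AB − BA‖, where ‖·‖ is the operator norm on d×d complex matrices. -/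
/-!
Write `T x = 1 + x + x²/2` for the second-order Taylor polynomial of `exp`. A direct expansion
gives `T x * T y - T (x + y) = ⁅x, y⁆ / 2 + O(r³)` when `‖x‖, ‖y‖ ≤ r`, and replacing each `T` by
`exp` costs another `O(r³)`, so `exp x * exp y - exp (x + y) = ⁅x, y⁆ / 2 + O(r³)`. At
`x = A / n`, `y = B / n` the main term has norm `‖⁅A, B⁆‖ / (2 n²)` and the remainder is
`O(1 / n³)`, hence eventually at most `‖⁅A, B⁆‖ / (2 n²)`, unless `⁅A, B⁆ = 0`; in that case
`A` and `B` commute and the left-hand side vanishes.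
-/

open NormedSpace
open scoped Nat

section TaylorExp

variable (𝕂 : Type*) {𝔸 : Type*} [RCLike 𝕂] [NormedRing 𝔸] [NormedAlgebra 𝕂 𝔸]

def expTaylor2 (x : 𝔸) : 𝔸 := 1 + x + (2 : 𝕂)⁻¹ • x ^ 2

variable {𝕂}

theorem norm_exp_sub_sum_range_le [CompleteSpace 𝔸] {k : ℕ} (hk : 0 < k) {x : 𝔸}
    (hx : ‖x‖ ≤ 1 / 2) :
    ‖exp x - ∑ i ∈ Finset.range k, (i ! : 𝕂)⁻¹ • x ^ i‖ ≤ 2 * ‖x‖ ^ k := by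
  have hterm (n : ℕ) : ‖((n + k)! : 𝕂)⁻¹ • x ^ (n + k)‖ ≤ ‖x‖ ^ k * (1 / 2) ^ n := by
    rw [norm_smul, norm_inv, RCLike.norm_natCast]
    calc _ ≤ 1 * ‖x‖ ^ (n + k) := by
          gcongr
          · exact inv_le_one_of_one_le₀ (mod_cast (n + k).factorial_pos)
          · exact norm_pow_le' x (by omega)
      _ ≤ ‖x‖ ^ k * (1 / 2) ^ n := by
          rw [one_mul, pow_add, mul_comm]
          gcongr
  rw [← ((hasSum_nat_add_iff' k).mpr (exp_series_hasSum_exp' (𝕂 := 𝕂) x)).tsum_eq]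
  refine tsum_of_norm_bounded ?_ hterm
  simpa [mul_comm] using (hasSum_geometric_two.mul_left (‖x‖ ^ k))

theorem norm_exp_sub_expTaylor2_le [CompleteSpace 𝔸] {x : 𝔸} (hx : ‖x‖ ≤ 1 / 2) :
    ‖exp x - expTaylor2 𝕂 x‖ ≤ 2 * ‖x‖ ^ 3 := by
  have h := norm_exp_sub_sum_range_le (𝕂 := 𝕂) (k := 3) (by norm_num) hx
  simpa [Finset.sum_range_succ, expTaylor2] using h

theorem norm_expTaylor2_mul_le {z : 𝔸} (hz : ‖z‖ ≤ 1 / 2) (E : 𝔸) :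
    ‖expTaylor2 𝕂 z * E‖ ≤ 2 * ‖E‖ := by
  have hzE : ‖z * E‖ ≤ 1 / 2 * ‖E‖ := (norm_mul_le z E).trans (by gcongr)
  have hz2E : ‖z ^ 2 * E‖ ≤ (1 / 2) ^ 2 * ‖E‖ :=
    (norm_mul_le _ _).trans (by gcongr; exact (norm_pow_le' z two_pos).trans (by gcongr))
  calc ‖expTaylor2 𝕂 z * E‖ = ‖E + z * E + (2 : 𝕂)⁻¹ • (z ^ 2 * E)‖ := by
        simp only [expTaylor2, add_mul, one_mul, smul_mul_assoc]
    _ ≤ ‖E‖ + ‖z * E‖ + 2⁻¹ * ‖z ^ 2 * E‖ := by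
        grw [norm_add₃_le, norm_smul, norm_inv, RCLike.norm_ofNat]
    _ ≤ 2 * ‖E‖ := by linarith [norm_nonneg E]

theorem norm_mul_expTaylor2_le {z : 𝔸} (hz : ‖z‖ ≤ 1 / 2) (E : 𝔸) :
    ‖E * expTaylor2 𝕂 z‖ ≤ 2 * ‖E‖ := by
  have hEz : ‖E * z‖ ≤ ‖E‖ * (1 / 2) := (norm_mul_le E z).trans (by gcongr)
  have hEz2 : ‖E * z ^ 2‖ ≤ ‖E‖ * (1 / 2) ^ 2 :=
    (norm_mul_le _ _).trans (by gcongr; exact (norm_pow_le' z two_pos).trans (by gcongr))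
  calc ‖E * expTaylor2 𝕂 z‖ = ‖E + E * z + (2 : 𝕂)⁻¹ • (E * z ^ 2)‖ := by
        simp only [expTaylor2, mul_add, mul_one, mul_smul_comm]
    _ ≤ ‖E‖ + ‖E * z‖ + 2⁻¹ * ‖E * z ^ 2‖ := by
        grw [norm_add₃_le, norm_smul, norm_inv, RCLike.norm_ofNat]
    _ ≤ 2 * ‖E‖ := by linarith [norm_nonneg E]

theorem expTaylor2_mul_expTaylor2_sub_expTaylor2_add (x y : 𝔸) :
    expTaylor2 𝕂 x * expTaylor2 𝕂 y - expTaylor2 𝕂 (x + y) - (2 : 𝕂)⁻¹ • ⁅x, y⁆ =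
      (2 : 𝕂)⁻¹ • (x * y ^ 2) + (2 : 𝕂)⁻¹ • (x ^ 2 * y) + (4 : 𝕂)⁻¹ • (x ^ 2 * y ^ 2) := by
  simp only [expTaylor2, Ring.lie_def, sq, mul_add, add_mul, mul_one, one_mul, smul_mul_assoc,
    mul_smul_comm, smul_smul, smul_sub, smul_add, mul_assoc]
  match_scalars <;> norm_num

theorem norm_expTaylor2_mul_expTaylor2_sub_expTaylor2_add_le {x y : 𝔸} {r : ℝ} (hx : ‖x‖ ≤ r)
    (hy : ‖y‖ ≤ r) (hr : r ≤ 1) :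
    ‖expTaylor2 𝕂 x * expTaylor2 𝕂 y - expTaylor2 𝕂 (x + y) - (2 : 𝕂)⁻¹ • ⁅x, y⁆‖ ≤
      2 * r ^ 3 := by
  have hr0 : 0 ≤ r := (norm_nonneg x).trans hx
  have hx2 : ‖x ^ 2‖ ≤ r ^ 2 := (norm_pow_le' x two_pos).trans (by gcongr)
  have hy2 : ‖y ^ 2‖ ≤ r ^ 2 := (norm_pow_le' y two_pos).trans (by gcongr)
  have h1 : ‖x * y ^ 2‖ ≤ r * r ^ 2 := (norm_mul_le _ _).trans (by gcongr)
  have h2 : ‖x ^ 2 * y‖ ≤ r ^ 2 * r := (norm_mul_le _ _).trans (by gcongr)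
  have h3 : ‖x ^ 2 * y ^ 2‖ ≤ r ^ 2 * r ^ 2 := (norm_mul_le _ _).trans (by gcongr)
  have hr4 : r ^ 2 * r ^ 2 ≤ r ^ 3 := by nlinarith [pow_nonneg hr0 3]
  rw [expTaylor2_mul_expTaylor2_sub_expTaylor2_add]
  grw [norm_add₃_le, norm_smul, norm_smul, norm_smul, norm_inv, norm_inv, RCLike.norm_ofNat,
    RCLike.norm_ofNat, h1, h2, h3, hr4]
  linarith [pow_nonneg hr0 3]

theorem norm_exp_mul_exp_sub_exp_add_sub_lie_le [CompleteSpace 𝔸] {x y : 𝔸} {r : ℝ}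
    (hx : ‖x‖ ≤ r) (hy : ‖y‖ ≤ r) (hr : r ≤ 1 / 4) :
    ‖exp x * exp y - exp (x + y) - (2 : 𝕂)⁻¹ • ⁅x, y⁆‖ ≤ 27 * r ^ 3 := by
  have hr0 : 0 ≤ r := (norm_nonneg x).trans hx
  have hxy : ‖x + y‖ ≤ 2 * r := (norm_add_le x y).trans (by linarith)
  have hRx : ‖exp x - expTaylor2 𝕂 x‖ ≤ 2 * r ^ 3 :=
    (norm_exp_sub_expTaylor2_le (by linarith)).trans (by gcongr)
  have hRy : ‖exp y - expTaylor2 𝕂 y‖ ≤ 2 * r ^ 3 :=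
    (norm_exp_sub_expTaylor2_le (by linarith)).trans (by gcongr)
  have hRxy : ‖exp (x + y) - expTaylor2 𝕂 (x + y)‖ ≤ 16 * r ^ 3 :=
    (norm_exp_sub_expTaylor2_le (by linarith)).trans (by grw [hxy]; linarith)
  have hRxRy : ‖(exp x - expTaylor2 𝕂 x) * (exp y - expTaylor2 𝕂 y)‖ ≤ r ^ 3 := by
    grw [norm_mul_le, hRx, hRy]
    nlinarith [pow_le_pow_left₀ hr0 hr 3, pow_nonneg hr0 3]
  have hT := norm_expTaylor2_mul_expTaylor2_sub_expTaylor2_add_le (𝕂 := 𝕂) hx hy (by linarith)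
  calc ‖exp x * exp y - exp (x + y) - (2 : 𝕂)⁻¹ • ⁅x, y⁆‖
      = ‖expTaylor2 𝕂 x * (exp y - expTaylor2 𝕂 y) + (exp x - expTaylor2 𝕂 x) * expTaylor2 𝕂 y
          + (exp x - expTaylor2 𝕂 x) * (exp y - expTaylor2 𝕂 y)
          - (exp (x + y) - expTaylor2 𝕂 (x + y))
          + (expTaylor2 𝕂 x * expTaylor2 𝕂 y - expTaylor2 𝕂 (x + y) - (2 : 𝕂)⁻¹ • ⁅x, y⁆)‖ := by
        congr 1
        noncomm_ring
    _ ≤ 2 * (2 * r ^ 3) + 2 * (2 * r ^ 3) + r ^ 3 + 16 * r ^ 3 + 2 * r ^ 3 := by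
        grw [norm_add_le, norm_sub_le, norm_add₃_le, norm_expTaylor2_mul_le (by linarith),
          norm_mul_expTaylor2_le (by linarith), hRx, hRy, hRxRy, hRxy, hT]
    _ = 27 * r ^ 3 := by ring

open Filter in
theorem eventually_norm_exp_inv_smul_mul_exp_inv_smul_sub_le [CompleteSpace 𝔸] {x y : 𝔸}
    (hxy : ⁅x, y⁆ ≠ 0) :
    ∀ᶠ n : ℕ in atTop, ‖exp ((n : 𝕂)⁻¹ • x) * exp ((n : 𝕂)⁻¹ • y) -
      exp ((n : 𝕂)⁻¹ • x + (n : 𝕂)⁻¹ • y)‖ ≤ 1 / (n : ℝ) ^ 2 * ‖⁅x, y⁆‖ := by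
  set m := max ‖x‖ ‖y‖
  set c := ‖⁅x, y⁆‖
  have hc : 0 < c := norm_pos_iff.2 hxy
  obtain ⟨N, hN⟩ := exists_nat_ge (max (4 * m) (54 * m ^ 3 / c))
  refine eventually_atTop.2 ⟨N + 1, fun n hNn => ?_⟩
  have hn : (N : ℝ) + 1 ≤ n := mod_cast hNn
  have hn0 : (0 : ℝ) < n := by linarith [N.cast_nonneg (α := ℝ)]
  have hm4 : m / n ≤ 1 / 4 := by
    rw [div_le_iff₀ hn0]; linarith [le_max_left (4 * m) (54 * m ^ 3 / c)]
  have hm3 : 54 * m ^ 3 ≤ c * n := by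
    rw [← div_le_iff₀' hc]; linarith [le_max_right (4 * m) (54 * m ^ 3 / c)]
  have hnorm (z : 𝔸) : ‖(n : 𝕂)⁻¹ • z‖ = ‖z‖ / n := by
    rw [norm_smul, norm_inv, RCLike.norm_natCast, inv_mul_eq_div]
  have hlie : ‖(2 : 𝕂)⁻¹ • ⁅(n : 𝕂)⁻¹ • x, (n : 𝕂)⁻¹ • y⁆‖ = c / (2 * n ^ 2) := by
    rw [Ring.lie_def, smul_mul_smul_comm, smul_mul_smul_comm, ← smul_sub, ← Ring.lie_def,
      smul_smul, norm_smul]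
    simp only [norm_mul, norm_inv, RCLike.norm_ofNat, RCLike.norm_natCast, c]
    field_simp
  have htail : 27 * (m / n) ^ 3 ≤ c / (2 * n ^ 2) := by
    rw [div_pow, mul_div_assoc', div_le_div_iff₀ (by positivity) (by positivity)]
    nlinarith [mul_le_mul_of_nonneg_left hm3 (sq_nonneg (n : ℝ))]
  have key := norm_exp_mul_exp_sub_exp_add_sub_lie_le (𝕂 := 𝕂)
    (hnorm x ▸ div_le_div_of_nonneg_right (le_max_left _ _) hn0.le)
    (hnorm y ▸ div_le_div_of_nonneg_right (le_max_right _ _) hn0.le) hm4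
  calc _ ≤ c / (2 * n ^ 2) + 27 * (m / n) ^ 3 :=
        hlie ▸ (norm_le_norm_add_norm_sub' _ _).trans (by gcongr)
    _ ≤ c / (2 * n ^ 2) + c / (2 * n ^ 2) := by gcongr
    _ = 1 / n ^ 2 * c := by field_simp; ring

end TaylorExp

open scoped Matrix.Norms.L2Operator

theorem norm_exp_prod_sub_exp_sum_le_general {d : ℕ}
    (A B : Matrix (Fin d) (Fin d) ℂ) :
    ∃ N : ℕ, ∀ n : ℕ, N ≤ n →
      ‖NormedSpace.exp ((n : ℂ)⁻¹ • A) * NormedSpace.exp ((n : ℂ)⁻¹ • B) -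
          NormedSpace.exp ((n : ℂ)⁻¹ • (A + B))‖ ≤
        (1 / (n : ℝ) ^ 2) * ‖A * B - B * A‖ := by
  by_cases hAB : Commute A B
  · refine ⟨0, fun n _ => ?_⟩
    rw [smul_add, Matrix.exp_add_of_commute _ _ ((hAB.smul_left _).smul_right _), sub_self,
      norm_zero]
    positivity
  have hlie : ⁅A, B⁆ ≠ 0 := by rwa [Ring.lie_def, sub_ne_zero]
  simpa only [smul_add, Ring.lie_def] using
    Filter.eventually_atTop.1 (eventually_norm_exp_inv_smul_mul_exp_inv_smul_sub_le (𝕂 := ℂ) hlie)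

/-- There exists `N` such that for all `n ≥ N`,
`‖exp(A/n)·exp(B/n) − exp((A + B)/n)‖ ≤ (1/n²)·‖AB − BA‖` in the operator norm. -/
theorem norm_exp_prod_sub_exp_sum_le {d : ℕ} (hd : 1 ≤ d)
    (A B : Matrix (Fin d) (Fin d) ℂ) :
    ∃ N : ℕ, ∀ n : ℕ, N ≤ n →
      ‖NormedSpace.exp ((n : ℂ)⁻¹ • A) * NormedSpace.exp ((n : ℂ)⁻¹ • B) -
          NormedSpace.exp ((n : ℂ)⁻¹ • (A + B))‖ ≤
        (1 / (n : ℝ) ^ 2) * ‖A * B - B * A‖ :=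
  norm_exp_prod_sub_exp_sum_le_general A B
end

section
/- Let A = E₁₂ and B = E₁₁ be the 2×2 complex matrices with a single entry 1 in position (1,2) and (1,1) respectively, and zeros elsewhere. For every n ≥ 1 and every word w ∈ W_n, F(w) is the 2×2 matrix with entries F(w)₁₁ = e, F(w)₁₂ = (1/n)·(e^{h₁(w)/n} + e^{h₂(w)/n} + … + e^{h_n(w)/n}), F(w)₂₁ = 0, and F(w)₂₂ = 1, where h_i(w) denotes the number of B's appearing in w before the i-th A. -/
/-- `F(w) = exp(w[1]/n) ⬝ exp(w[2]/n) ⋯ exp(w[2n]/n)`, the ordered product of matrix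
exponentials, where the letter A (`true`) is replaced by the matrix `A/n` and the letter
B (`false`) by `B/n`. -/
noncomputable def F (A B : Matrix (Fin 2) (Fin 2) ℂ) (n : ℕ)
    (w : Fin (2 * n) → Bool) : Matrix (Fin 2) (Fin 2) ℂ :=
  (List.ofFn fun i : Fin (2 * n) =>
    NormedSpace.exp ((n : ℂ)⁻¹ • (if w i then A else B))).prod

open Finset

theorem NormedSpace.exp_eq_one_add_of_sq_eq_zero {𝔸 : Type*} [Ring 𝔸] [Algebra ℚ 𝔸]
    [TopologicalSpace 𝔸] [IsTopologicalRing 𝔸] {x : 𝔸} (hx : x ^ 2 = 0) :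
    NormedSpace.exp x = 1 + x := by
  rw [NormedSpace.exp_eq_tsum ℚ]
  dsimp only
  rw [tsum_eq_sum (s := range 2) fun k hk => by
    rw [pow_eq_zero_of_le (by simp at hk; omega) hx, smul_zero]]
  simp [sum_range_succ]

namespace Matrix

theorem exp_single_zero_one (c : ℂ) :
    NormedSpace.exp (single (0 : Fin 2) 1 c) = !![1, c; 0, 1] := by
  rw [NormedSpace.exp_eq_one_add_of_sq_eq_zero]
  · ext i j; fin_cases i <;> fin_cases j <;> simp
  · ext i j; fin_cases i <;> fin_cases j <;> simp [sq, mul_apply]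

theorem exp_single_zero_zero (c : ℂ) :
    NormedSpace.exp (single (0 : Fin 2) 0 c) = !![Complex.exp c, 0; 0, 1] := by
  have hdiag : single (0 : Fin 2) 0 c = diagonal ![c, 0] := by
    ext i j; fin_cases i <;> fin_cases j <;> simp
  rw [hdiag, exp_diagonal]
  ext i j
  fin_cases i <;> fin_cases j <;> simp [Pi.coe_exp, NormedSpace.exp_zero, ← Complex.exp_eq_exp_ℂ]

theorem prod_ofFn_affine {R : Type*} [CommRing R] {m : ℕ} (a b : Fin m → R) :
    (List.ofFn fun i => !![a i, b i; 0, 1]).prod =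
      !![∏ i, a i, ∑ i, (∏ j ∈ univ.filter (· < i), a j) * b i; 0, 1] := by
  induction m with
  | zero => ext i j; fin_cases i <;> fin_cases j <;> simp
  | succ m ih =>
    have hprefix : ∀ i : Fin m,
        ∏ j ∈ univ.filter (· < i.succ), a j = a 0 * ∏ j ∈ univ.filter (· < i), a j.succ := by
      intro i
      simp only [prod_filter, Fin.prod_univ_succ, Fin.succ_pos, if_true, Fin.succ_lt_succ_iff]
    rw [List.ofFn_succ, List.prod_cons, ih (fun i => a i.succ) (fun i => b i.succ),
      Fin.prod_univ_succ, Fin.sum_univ_succ]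
    simp only [hprefix, mul_assoc, ← mul_sum]
    ext i j; fin_cases i <;> fin_cases j <;> simp [add_comm]

end Matrix

theorem Finset.prod_ite_one_eq_pow_card {ι M : Type*} [CommMonoid M] (s : Finset ι)
    (w : ι → Bool) (x : M) :
    ∏ i ∈ s, (if w i then 1 else x) = x ^ #{i ∈ s | w i = false} := by
  simp [prod_ite, prod_const]

theorem countLetter_eq_card_filter_lt {m : ℕ} (w : Fin m → Bool) (b : Bool) (i : Fin m) :
    countLetter m w b i = #{j ∈ univ.filter (· < i) | w j = b} := by
  rw [countLetter, filter_filter]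
  rfl

theorem IsWord.card_filter_eq_false {n : ℕ} {w : Fin (2 * n) → Bool} (hw : IsWord n w) :
    #{i | w i = false} = n := by
  have hsplit := card_filter_add_card_filter_not (s := univ) fun i : Fin (2 * n) => w i = true
  simp only [Bool.not_eq_true, card_univ, Fintype.card_fin] at hsplit
  rw [IsWord] at hw
  omega

-- The sum `Σᵢ e^{hᵢ(w)/n}` is reindexed by the position `k` of the `i`-th A.
/-- For `A = E₁₂` and `B = E₁₁` in `M₂(ℂ)` and any word `w ∈ W_n`,
`F(w) = !![e, (1/n)·Σᵢ e^{hᵢ(w)/n}; 0, 1]`, where `h_i(w)` is the number of B's appearing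
in `w` before the `i`-th A. Here the sum `Σ_{i=1}^n e^{h_i(w)/n}` is written, reindexing
each `i` by the position of the `i`-th A, as the sum over the positions `k` carrying the
letter A of `e^{(number of B's before position k)/n}`. -/
theorem F_stdBasis_eq (n : ℕ) (hn : 1 ≤ n) (w : Fin (2 * n) → Bool) (hw : IsWord n w) :
    F (Matrix.single 0 1 (1 : ℂ)) (Matrix.single 0 0 (1 : ℂ)) n w =
      !![(Real.exp 1 : ℂ),
          (((1 / (n : ℝ)) * ∑ k ∈ Finset.univ.filter (fun k : Fin (2 * n) => w k = true),
            Real.exp ((countLetter (2 * n) w false (k : ℕ) : ℝ) / n) : ℝ) : ℂ);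
        0, 1] := by
  set E := Complex.exp (n : ℂ)⁻¹
  have hletter : ∀ i, NormedSpace.exp ((n : ℂ)⁻¹ •
      (if w i then Matrix.single 0 1 (1 : ℂ) else Matrix.single 0 0 (1 : ℂ))) =
      !![if w i then 1 else E, if w i then (n : ℂ)⁻¹ else 0; 0, 1] := by
    intro i
    cases w i
    · simp [Matrix.exp_single_zero_zero, E]
    · simp [Matrix.exp_single_zero_one]
  have hpow : ∀ k : ℕ, E ^ k = (Real.exp (k / n) : ℂ) := by
    intro k
    rw [← Complex.exp_nat_mul]
    push_cast
    ring_nf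
  rw [F, funext hletter, Matrix.prod_ofFn_affine]
  simp only [prod_ite_one_eq_pow_card, ← countLetter_eq_card_filter_lt, hw.card_filter_eq_false]
  have hsum :
      ∑ k : Fin (2 * n), E ^ countLetter (2 * n) w false k * (if w k then (n : ℂ)⁻¹ else 0) =
      (((1 / (n : ℝ)) * ∑ k ∈ univ.filter (fun k => w k = true),
        Real.exp ((countLetter (2 * n) w false k : ℝ) / n) : ℝ) : ℂ) := by
    rw [Complex.ofReal_mul, Complex.ofReal_sum, mul_sum, sum_filter]
    refine sum_congr rfl fun k _ => ?_
    split_ifs <;> simp [hpow, mul_comm]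
  rw [hsum, hpow, div_self (Nat.cast_ne_zero.mpr (by omega))]
end
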